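/- arXiv:2204.09988 — 2 statements merged into one kernel-verified Lean document; each statement's English description precedes it below -/
import Mathlib

section
/- Let T be an invertible m×m complex matrix, γ a row vector with γ·e = 1 (where e is the all-ones column vector), and set 𝐓 = -T·e. If η is a complex number such that det(cμ·e·γ + T - cη·I) = 0 and cη is not an eigenvalue of T (so cη·I - T is invertible), then (μ - η)/μ = γ·(cη·I - T)⁻¹·𝐓. -/
/-! By the matrix determinant lemma, `det(cμ·e·γ - (cη·I - T)) = 0` with `cη·I - T` invertible
forces `cμ · γ(cη·I - T)⁻¹e = 1`. Writing `𝐓 = -T·e = (cη·I - T)·e - cη·e` then gives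
`γ(cη·I - T)⁻¹𝐓 = γ·e - cη · γ(cη·I - T)⁻¹e = 1 - η/μ`. -/

open Matrix

namespace Matrix

variable {n : Type*} [Fintype n] [DecidableEq n]

theorem det_add_vecMulVec {R : Type*} [CommRing R] {A : Matrix n n R} (hA : IsUnit A.det)
    (u v : n → R) : (A + vecMulVec u v).det = A.det * (1 + v ⬝ᵥ A⁻¹ *ᵥ u) := by
  rw [vecMulVec_eq Unit, det_add_replicateCol_mul_replicateRow hA, ← replicateRow_vecMul,
    replicateRow_mul_replicateCol, det_unique (n := Unit)]
  simp [dotProduct_mulVec]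

theorem dotProduct_inv_mulVec_eq_one_of_det_vecMulVec_sub_eq_zero {K : Type*} [Field K]
    {A : Matrix n n K} (hA : IsUnit A.det) {u v : n → K} (h : (vecMulVec u v - A).det = 0) :
    v ⬝ᵥ A⁻¹ *ᵥ u = 1 := by
  have hsub : vecMulVec u v - A = -(A + vecMulVec (-u) v) := by
    rw [neg_vecMulVec]
    abel
  rw [hsub, det_neg, det_add_vecMulVec hA, mulVec_neg, dotProduct_neg] at h
  have hfactor : 1 + -(v ⬝ᵥ A⁻¹ *ᵥ u) = 0 := by simpa [hA.ne_zero] using h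
  linear_combination -hfactor

end Matrix

theorem stmt_0_general {m : ℕ} (c : ℕ) (μ : ℂ)
    (T : Matrix (Fin m) (Fin m) ℂ)
    (γ : Fin m → ℂ) (hγ : γ ⬝ᵥ (fun _ => (1 : ℂ)) = 1)
    (η : ℂ)
    (hdet : (((c : ℂ) * μ) • vecMulVec (fun _ => (1 : ℂ)) γ + T - ((c : ℂ) * η) • 1).det = 0)
    (hinv : IsUnit (((c : ℂ) * η) • (1 : Matrix (Fin m) (Fin m) ℂ) - T).det) :
    (μ - η) / μ =
      γ ⬝ᵥ ((((c : ℂ) * η) • (1 : Matrix (Fin m) (Fin m) ℂ) - T)⁻¹).mulVec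
        (-(T.mulVec fun _ => (1 : ℂ))) := by
  set e : Fin m → ℂ := fun _ => 1
  set A : Matrix (Fin m) (Fin m) ℂ := ((c : ℂ) * η) • 1 - T
  have key : (c * μ) * (γ ⬝ᵥ A⁻¹ *ᵥ e) = 1 := by
    rw [← smul_eq_mul, ← dotProduct_smul, ← mulVec_smul]
    refine dotProduct_inv_mulVec_eq_one_of_det_vecMulVec_sub_eq_zero hinv ?_
    rw [smul_vecMulVec, ← hdet, sub_sub_eq_add_sub]
  have hTe : -(T *ᵥ e) = A *ᵥ e - ((c : ℂ) * η) • e := by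
    rw [sub_mulVec, smul_mulVec, one_mulVec]
    abel
  have hμ : μ ≠ 0 := right_ne_zero_of_mul (left_ne_zero_of_mul_eq_one key)
  rw [hTe, mulVec_sub, mulVec_mulVec, nonsing_inv_mul _ hinv, one_mulVec, dotProduct_sub, hγ,
    mulVec_smul, dotProduct_smul, smul_eq_mul, div_eq_iff hμ]
  linear_combination η * key

/-- Lemma B.1: if `det(cμ·e·γ + T - cη·I) = 0` and `cη·I - T` is invertible, then
`(μ - η)/μ = γ·(cη·I - T)⁻¹·𝐓` where `𝐓 = -T·e`. -/
theorem stmt_0 {m : ℕ} (c : ℕ) (hc : 0 < c) (μ : ℂ) (hμ : μ ≠ 0)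
    (T : Matrix (Fin m) (Fin m) ℂ) (hT : IsUnit T.det)
    (γ : Fin m → ℂ) (hγ : γ ⬝ᵥ (fun _ => (1 : ℂ)) = 1)
    (η : ℂ)
    (hdet : (((c : ℂ) * μ) • vecMulVec (fun _ => (1 : ℂ)) γ + T - ((c : ℂ) * η) • 1).det = 0)
    (hinv : IsUnit (((c : ℂ) * η) • (1 : Matrix (Fin m) (Fin m) ℂ) - T).det) :
    (μ - η) / μ =
      γ ⬝ᵥ ((((c : ℂ) * η) • (1 : Matrix (Fin m) (Fin m) ℂ) - T)⁻¹).mulVec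
        (-(T.mulVec fun _ => (1 : ℂ))) :=
  stmt_0_general c μ T γ hγ η hdet hinv
end

section
/- Under the hypotheses of the previous statement (B·Q·B⁻¹ = diag(0, κ₂,…,κ_m) with κ_i ≠ 0 and κ_i ≠ cμ for i ≥ 2, and 0 ≠ cμ), let D = diag(1/(cμ - κ₁),…,1/(cμ - κ_m)). Then the matrix M = cμ·𝐓·γ·B⁻¹·D·B - (c-1)μ·I + (c-1)μ·e·γ + T satisfies M·e = 0; in particular M is singular. -/
open Matrix

lemma aux_vecMulVec_mulVec {n : Type*} [Fintype n] (u v w : n → ℂ) :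
    (vecMulVec u v).mulVec w = (v ⬝ᵥ w) • u := by
  funext i
  simp only [mulVec, dotProduct, vecMulVec_apply, Pi.smul_apply, smul_eq_mul, Finset.sum_mul]
  exact Finset.sum_congr rfl fun j _ => by ring

/-- Lemma B.3 (singularity part): with `D = diag(1/(cμ - κ_i))`, the matrix
`M = cμ·𝐓·γ·B⁻¹·D·B - (c-1)μ·I + (c-1)μ·e·γ + T` satisfies `M·e = 0`, so `M` is singular. -/
theorem stmt_8 {m : ℕ} (c : ℕ) (hc : 0 < c) (μ : ℂ) (hμ : μ ≠ 0)
    (T : Matrix (Fin (m + 1)) (Fin (m + 1)) ℂ)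
    (γ : Fin (m + 1) → ℂ) (hγ : γ ⬝ᵥ (fun _ => (1 : ℂ)) = 1)
    (B : Matrix (Fin (m + 1)) (Fin (m + 1)) ℂ) (hB : IsUnit B.det)
    (κ : Fin (m + 1) → ℂ)
    (heig : ∀ i, vecMul (B i) (T + vecMulVec (-(T.mulVec fun _ => (1 : ℂ))) γ) = κ i • B i)
    (hκ0 : κ 0 = 0) (hκ : ∀ i, i ≠ 0 → κ i ≠ 0)
    (hcμ : ∀ i, κ i ≠ (c : ℂ) * μ) (hcμ0 : (c : ℂ) * μ ≠ 0) :
    (((c : ℂ) * μ) • (vecMulVec (-(T.mulVec fun _ => (1 : ℂ))) γ *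
          (B⁻¹ * diagonal (fun i => ((c : ℂ) * μ - κ i)⁻¹) * B))
        - (((c : ℂ) - 1) * μ) • (1 : Matrix (Fin (m + 1)) (Fin (m + 1)) ℂ)
        + (((c : ℂ) - 1) * μ) • vecMulVec (fun _ => (1 : ℂ)) γ
        + T).mulVec (fun _ => (1 : ℂ)) = 0 ∧
    (((c : ℂ) * μ) • (vecMulVec (-(T.mulVec fun _ => (1 : ℂ))) γ *
          (B⁻¹ * diagonal (fun i => ((c : ℂ) * μ - κ i)⁻¹) * B))
        - (((c : ℂ) - 1) * μ) • (1 : Matrix (Fin (m + 1)) (Fin (m + 1)) ℂ)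
        + (((c : ℂ) - 1) * μ) • vecMulVec (fun _ => (1 : ℂ)) γ
        + T).det = 0 := by
  classical
  set e : Fin (m + 1) → ℂ := (fun _ => (1 : ℂ)) with he
  set TT : Fin (m + 1) → ℂ := -(T.mulVec e) with hTT
  set Q : Matrix (Fin (m + 1)) (Fin (m + 1)) ℂ := T + vecMulVec TT γ with hQ
  set D : Matrix (Fin (m + 1)) (Fin (m + 1)) ℂ :=
    diagonal (fun i => ((c : ℂ) * μ - κ i)⁻¹) with hD
  have hQe : Q.mulVec e = 0 := by
    rw [hQ, add_mulVec, aux_vecMulVec_mulVec, hγ, one_smul, hTT]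
    simp
  have hBQ : B * Q = diagonal κ * B := by
    ext i j
    have := congrFun (heig i) j
    rw [Matrix.mul_apply, Matrix.diagonal_mul]
    simpa [vecMul, dotProduct, mul_comm] using this
  have hw : (diagonal κ).mulVec (B.mulVec e) = 0 := by
    rw [mulVec_mulVec, ← hBQ, ← mulVec_mulVec, hQe, mulVec_zero]
  have hwzero : ∀ i, i ≠ 0 → B.mulVec e i = 0 := by
    intro i hi
    have := congrFun hw i
    simp only [mulVec_diagonal, Pi.zero_apply] at this
    exact (mul_eq_zero.mp this).resolve_left (hκ i hi)
  have hDw : D.mulVec (B.mulVec e) = ((c : ℂ) * μ)⁻¹ • B.mulVec e := by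
    funext i
    by_cases hi : i = 0
    · subst hi
      simp [hD, mulVec_diagonal, hκ0]
    · simp [hD, mulVec_diagonal, hwzero i hi]
  have hP : (B⁻¹ * D * B).mulVec e = ((c : ℂ) * μ)⁻¹ • e := by
    rw [Matrix.mul_assoc, ← mulVec_mulVec, ← mulVec_mulVec, hDw, mulVec_smul,
      mulVec_mulVec, nonsing_inv_mul B hB, one_mulVec]
  have hMe : (((c : ℂ) * μ) • (vecMulVec TT γ * (B⁻¹ * D * B))
        - (((c : ℂ) - 1) * μ) • (1 : Matrix (Fin (m + 1)) (Fin (m + 1)) ℂ)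
        + (((c : ℂ) - 1) * μ) • vecMulVec e γ + T).mulVec e = 0 := by
    rw [add_mulVec, add_mulVec, sub_mulVec, smul_mulVec, smul_mulVec,
      smul_mulVec, ← mulVec_mulVec, hP, mulVec_smul, aux_vecMulVec_mulVec,
      aux_vecMulVec_mulVec, hγ, one_smul, one_mulVec, one_smul, smul_smul,
      mul_inv_cancel₀ hcμ0, one_smul, hTT]
    funext i
    simp
  refine ⟨hMe, ?_⟩
  rw [← Matrix.exists_mulVec_eq_zero_iff]
  exact ⟨e, by simp [he, funext_iff], hMe⟩
end
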